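/- Let G be a connected simple graph of order n in which every vertex has degree δ or Δ, where δ < Δ. Suppose the set of vertices of degree Δ (of cardinality l) induces a complete subgraph of G and the set of vertices of degree δ is an independent set. Then SO₅(G) = 2π · δ(n−l) · f(δ, Δ), and consequently SO₅(G) ≤ 2π · δ(n−δ) · f(δ, n−1). -/
import Mathlib


/-- `f a b = |a² − b²| / (√2 + 2√(a² + b²))`. -/
noncomputable def f (a b : ℝ) : ℝ :=
  |a ^ 2 - b ^ 2| / (Real.sqrt 2 + 2 * Real.sqrt (a ^ 2 + b ^ 2))

theorem f_symm (a b : ℝ) : f a b = f b a := by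
  unfold f; rw [abs_sub_comm, add_comm (a ^ 2)]

/-- The Sombor-index-like invariant `SO₅(G) = 2π · Σ_{uv ∈ E(G)} f(d(u), d(v))`. -/
noncomputable def SO5 {V : Type*} [Fintype V] [DecidableEq V] (G : SimpleGraph V)
    [DecidableRel G.Adj] : ℝ :=
  2 * Real.pi * ∑ e ∈ G.edgeFinset,
    Sym2.lift ⟨fun u v => f (G.degree u) (G.degree v),
      fun u v => f_symm (G.degree u) (G.degree v)⟩ e

lemma f_nonneg (a b : ℝ) : 0 ≤ f a b := by unfold f; positivity

lemma f_self (a : ℝ) : f a a = 0 := by unfold f; simp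

lemma f_mono {d a b : ℝ} (hd : 0 ≤ d) (hda : d ≤ a) (hab : a ≤ b) :
    f d a ≤ f d b := by
  unfold f
  have ha2 : d ^ 2 ≤ a ^ 2 := by nlinarith
  have hb2 : a ^ 2 ≤ b ^ 2 := by nlinarith
  rw [abs_sub_comm, abs_of_nonneg (by linarith), abs_sub_comm (d ^ 2),
    abs_of_nonneg (by linarith)]
  set sa := Real.sqrt (d ^ 2 + a ^ 2) with hsa
  set sb := Real.sqrt (d ^ 2 + b ^ 2) with hsb
  have hsa0 : 0 ≤ sa := Real.sqrt_nonneg _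
  have hsb0 : 0 ≤ sb := Real.sqrt_nonneg _
  have hsa2 : sa ^ 2 = d ^ 2 + a ^ 2 := Real.sq_sqrt (by positivity)
  have hsb2 : sb ^ 2 = d ^ 2 + b ^ 2 := Real.sq_sqrt (by positivity)
  have h2 : (0:ℝ) < Real.sqrt 2 := by positivity
  have hx : (0:ℝ) ≤ a ^ 2 - d ^ 2 := by linarith
  have hy : (0:ℝ) ≤ b ^ 2 - d ^ 2 := by linarith
  have hxy : a ^ 2 - d ^ 2 ≤ b ^ 2 - d ^ 2 := by linarith
  have hsq : ((a ^ 2 - d ^ 2) * sb) ^ 2 ≤ ((b ^ 2 - d ^ 2) * sa) ^ 2 := by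
    rw [mul_pow, mul_pow, hsa2, hsb2]
    nlinarith [mul_nonneg (mul_nonneg (sq_nonneg d) (add_nonneg hx hy)) (sub_nonneg.2 hxy),
      mul_nonneg (mul_nonneg hx hy) (sub_nonneg.2 hxy)]
  have key : (a ^ 2 - d ^ 2) * sb ≤ (b ^ 2 - d ^ 2) * sa := by
    nlinarith [hsq, mul_nonneg hx hsb0, mul_nonneg hy hsa0]
  rw [div_le_div_iff₀ (by positivity) (by positivity)]
  nlinarith [key, mul_nonneg (sub_nonneg.2 hxy) h2.le]

/-- If `G` is a connected graph of order `n` in which every vertex has degree `δ` or `Δ`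
with `δ < Δ`, the `l` vertices of degree `Δ` form a clique and the vertices of degree `δ`
form an independent set, then `SO₅(G) = 2π·δ(n−l)·f(δ,Δ) ≤ 2π·δ(n−δ)·f(δ,n−1)`. -/
theorem SO5_two_degrees_clique_indep {V : Type*} [Fintype V] [DecidableEq V]
    (G : SimpleGraph V) [DecidableRel G.Adj] (n δ Δ l : ℕ) (hn : Fintype.card V = n)
    (hconn : G.Connected) (hδΔ : δ < Δ)
    (hdeg : ∀ v : V, G.degree v = δ ∨ G.degree v = Δ)
    (hl : l = (Finset.univ.filter fun v : V => G.degree v = Δ).card)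
    (hclique : ∀ u v : V, G.degree u = Δ → G.degree v = Δ → u ≠ v → G.Adj u v)
    (hindep : ∀ u v : V, G.degree u = δ → G.degree v = δ → ¬ G.Adj u v) :
    SO5 G = 2 * Real.pi * ((δ : ℝ) * ((n : ℝ) - (l : ℝ))) * f (δ : ℝ) (Δ : ℝ) ∧
    SO5 G ≤ 2 * Real.pi * ((δ : ℝ) * ((n : ℝ) - (δ : ℝ))) * f (δ : ℝ) ((n : ℝ) - 1) := by
  classical
  have hne : Nonempty V := hconn.nonempty
  have hδΔ' : δ ≠ Δ := hδΔ.ne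
  set S : Finset V := Finset.univ.filter (fun v => G.degree v = δ) with hS
  have hnl : l ≤ n := by
    rw [hl, ← hn, ← Finset.card_univ]; exact Finset.card_filter_le _ _
  have hSeq : S = Finset.univ.filter (fun v => ¬ G.degree v = Δ) := by
    ext v
    simp only [hS, Finset.mem_filter, Finset.mem_univ, true_and]
    constructor
    · intro h h'; exact hδΔ' (h ▸ h')
    · intro h; rcases hdeg v with h' | h'
      · exact h'
      · exact absurd h' h
  have hScard : S.card = n - l := by
    have h1 := Finset.card_filter_add_card_filter_not
        (s := (Finset.univ : Finset V)) (p := fun v : V => G.degree v = Δ)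
    rw [Finset.card_univ, hn] at h1
    rw [hSeq]
    omega
  have hSl : (S.card : ℝ) = (n : ℝ) - (l : ℝ) := by
    rw [hScard, Nat.cast_sub hnl]
  -- sum computation
  have hsum : (∑ e ∈ G.edgeFinset,
      Sym2.lift ⟨fun u v => f (G.degree u) (G.degree v),
        fun u v => f_symm (G.degree u) (G.degree v)⟩ e)
      = (S.card : ℝ) * ((δ : ℝ) * f (δ : ℝ) (Δ : ℝ)) := by
    have step1 : ∀ e ∈ G.edgeFinset,
        Sym2.lift ⟨fun u v => f (G.degree u) (G.degree v),
          fun u v => f_symm (G.degree u) (G.degree v)⟩ e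
          = ∑ v ∈ S, if v ∈ e then f (δ : ℝ) (Δ : ℝ) else 0 := by
      intro e he
      induction e using Sym2.ind with
      | _ u v =>
        rw [SimpleGraph.mem_edgeFinset, SimpleGraph.mem_edgeSet] at he
        rw [Sym2.lift_mk]
        change f (G.degree u : ℝ) (G.degree v : ℝ) = _
        rcases hdeg u with hu | hu <;> rcases hdeg v with hv | hv
        · exact absurd he (hindep u v hu hv)
        · rw [hu, hv]
          have hco : ∀ w ∈ S, (if w ∈ s(u, v) then f (δ:ℝ) (Δ:ℝ) else 0)
              = if w = u then f (δ:ℝ) (Δ:ℝ) else 0 := by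
            intro w hw
            simp only [hS, Finset.mem_filter, Finset.mem_univ, true_and] at hw
            by_cases h : w = u
            · simp [h]
            · have hwv : w ≠ v := fun h' => hδΔ' (by rw [← hw, h', hv])
              simp [Sym2.mem_iff, h, hwv]
          rw [Finset.sum_congr rfl hco, Finset.sum_ite_eq' S u]
          have huS : u ∈ S := by
            simp only [hS, Finset.mem_filter, Finset.mem_univ, true_and]; exact hu
          simp [huS]
        · rw [hu, hv]
          have hco : ∀ w ∈ S, (if w ∈ s(u, v) then f (δ:ℝ) (Δ:ℝ) else 0)
              = if w = v then f (δ:ℝ) (Δ:ℝ) else 0 := by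
            intro w hw
            simp only [hS, Finset.mem_filter, Finset.mem_univ, true_and] at hw
            by_cases h : w = v
            · simp [h]
            · have hwu : w ≠ u := fun h' => hδΔ' (by rw [← hw, h', hu])
              simp [Sym2.mem_iff, h, hwu]
          rw [Finset.sum_congr rfl hco, Finset.sum_ite_eq' S v]
          have hvS : v ∈ S := by
            simp only [hS, Finset.mem_filter, Finset.mem_univ, true_and]; exact hv
          rw [if_pos hvS, f_symm]
        · rw [hu, hv, f_self]
          symm
          refine Finset.sum_eq_zero fun w hw => ?_
          simp only [hS, Finset.mem_filter, Finset.mem_univ, true_and] at hw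
          have hwu : w ≠ u := fun h' => hδΔ' (by rw [← hw, h', hu])
          have hwv : w ≠ v := fun h' => hδΔ' (by rw [← hw, h', hv])
          simp [Sym2.mem_iff, hwu, hwv]
    rw [Finset.sum_congr rfl step1, Finset.sum_comm]
    have step2 : ∀ v ∈ S,
        (∑ e ∈ G.edgeFinset, if v ∈ e then f (δ:ℝ) (Δ:ℝ) else 0)
          = (δ : ℝ) * f (δ:ℝ) (Δ:ℝ) := by
      intro v hv
      rw [← Finset.sum_filter]
      have hfil : G.edgeFinset.filter (fun e => v ∈ e) = G.incidenceFinset v := by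
        ext e
        simp [SimpleGraph.mem_incidenceFinset, SimpleGraph.incidenceSet,
          SimpleGraph.mem_edgeFinset, and_comm]
      rw [hfil, Finset.sum_const, SimpleGraph.card_incidenceFinset_eq_degree]
      simp only [hS, Finset.mem_filter, Finset.mem_univ, true_and] at hv
      rw [hv, nsmul_eq_mul]
    rw [Finset.sum_congr rfl step2, Finset.sum_const, nsmul_eq_mul]
  have heq : SO5 G = 2 * Real.pi * ((δ : ℝ) * ((n : ℝ) - (l : ℝ))) * f (δ : ℝ) (Δ : ℝ) := by
    rw [SO5, hsum, hSl]; ring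
  refine ⟨heq, ?_⟩
  rw [heq]
  have hpi : (0:ℝ) ≤ 2 * Real.pi := by positivity
  rcases Nat.eq_zero_or_pos δ with hδ0 | hδpos
  · subst hδ0; simp
  by_cases hex : ∃ u : V, G.degree u = δ
  · obtain ⟨u, hu⟩ := hex
    have hδl : δ ≤ l := by
      have hsub : G.neighborFinset u ⊆ Finset.univ.filter (fun v => G.degree v = Δ) := by
        intro w hw
        rw [SimpleGraph.mem_neighborFinset] at hw
        simp only [Finset.mem_filter, Finset.mem_univ, true_and]
        rcases hdeg w with h | h
        · exact absurd hw (hindep u w hu h)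
        · exact h
      have hc := Finset.card_le_card hsub
      rwa [SimpleGraph.card_neighborFinset_eq_degree, hu, ← hl] at hc
    have hlpos : 0 < l := lt_of_lt_of_le hδpos hδl
    obtain ⟨w, hwmem⟩ := Finset.card_pos.mp (hl ▸ hlpos)
    simp only [Finset.mem_filter, Finset.mem_univ, true_and] at hwmem
    have hΔn : Δ < n := by
      rw [← hn, ← hwmem]; exact G.degree_lt_card_verts w
    have hδn : δ < n := lt_trans hδΔ hΔn
    have hΔn' : (Δ : ℝ) ≤ (n : ℝ) - 1 := by
      have : (Δ : ℝ) + 1 ≤ (n : ℝ) := by exact_mod_cast hΔn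
      linarith
    have hfle : f (δ:ℝ) (Δ:ℝ) ≤ f (δ:ℝ) ((n:ℝ) - 1) := by
      refine f_mono (by positivity) (by exact_mod_cast hδΔ.le) hΔn'
    have hA : ((n:ℝ) - l) ≤ (n:ℝ) - δ := by
      have : (δ:ℝ) ≤ (l:ℝ) := by exact_mod_cast hδl
      linarith
    have h1 : 2 * Real.pi * ((δ:ℝ) * ((n:ℝ) - l)) ≤ 2 * Real.pi * ((δ:ℝ) * ((n:ℝ) - δ)) := by
      apply mul_le_mul_of_nonneg_left _ hpi
      exact mul_le_mul_of_nonneg_left hA (by positivity)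
    have hnonneg1 : (0:ℝ) ≤ 2 * Real.pi * ((δ:ℝ) * ((n:ℝ) - l)) := by
      have : (l:ℝ) ≤ (n:ℝ) := by exact_mod_cast hnl
      have h2 : (0:ℝ) ≤ (n:ℝ) - l := by linarith
      positivity
    exact mul_le_mul h1 hfle (f_nonneg _ _) (le_trans hnonneg1 h1)
  · -- no vertex of degree δ : all degree Δ, so S empty and n = l
    push_neg at hex
    have hSempty : S = ∅ := by
      rw [hS, Finset.filter_eq_empty_iff]
      intro v _
      exact hex v
    have hln : (n:ℝ) - (l:ℝ) = 0 := by
      have : (S.card : ℝ) = 0 := by rw [hSempty]; simp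
      rw [← hSl, this]
    rw [hln]
    obtain ⟨v⟩ := hne
    have hΔn : Δ < n := by
      have hv := (hdeg v).resolve_left (hex v)
      rw [← hn, ← hv]; exact G.degree_lt_card_verts v
    have hδn : (δ:ℝ) ≤ (n:ℝ) := by
      have : δ < n := lt_trans hδΔ hΔn
      exact_mod_cast this.le
    have : (0:ℝ) ≤ (n:ℝ) - δ := by linarith
    have hR : (0:ℝ) ≤ 2 * Real.pi * ((δ:ℝ) * ((n:ℝ) - δ)) * f (δ:ℝ) ((n:ℝ) - 1) := by
      have := f_nonneg (δ:ℝ) ((n:ℝ) - 1)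
      positivity
    simpa using hR
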